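/- The EM (Baum-Welch) step does not decrease the log-likelihood: let θ and θ' be two parameter sets for a finite hidden Markov model, fix an observation sequence x ∈ X^L, assume Z_θ := Σ_{σ ∈ S^L} P_θ(σ,x) > 0 and P_{θ'}(σ,x) > 0 for every σ with P_θ(σ,x) > 0. Then log Z_{θ'} − log Z_θ ≥ Q(θ';θ) − Q(θ;θ), where Q(η;θ) := Σ_{σ ∈ S^L} (P_θ(σ,x)/Z_θ) · log P_η(σ,x). In particular, if Q(θ';θ) ≥ Q(θ;θ) then the likelihood satisfies Z_{θ'} ≥ Z_θ. -/

import Mathlib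

/-!
EM monotonicity is Gibbs' inequality. Pointwise, `log y ≤ y - 1` at `y = c q / p` gives
`p log q - p log p ≤ c q - p - p log c` for every `c > 0`; summing over hidden paths with
`c = Z_θ / Z_θ'` makes the right-hand side `Z_θ (log Z_θ' - log Z_θ)`, and dividing by `Z_θ`
is the claim.
-/

open Finset

/-- The joint probability `P_θ(σ,x)` of a hidden Markov model of length `n+1`. -/
noncomputable def joint {S X : Type*} (π : S → ℝ) (T : S → S → ℝ) (E : X → S → ℝ)
    (x : ℕ → X) (n : ℕ) (σ : Fin (n + 1) → S) : ℝ :=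
  π (σ 0) * (∏ j : Fin n, T (σ j.castSucc) (σ j.succ)) *
    ∏ j : Fin (n + 1), E (x j) (σ j)

theorem joint_nonneg {S X : Type*} {π : S → ℝ} {T : S → S → ℝ} {E : X → S → ℝ}
    (hπ : ∀ s, 0 ≤ π s) (hT : ∀ s t, 0 ≤ T s t) (hE : ∀ x s, 0 ≤ E x s)
    (x : ℕ → X) (n : ℕ) (σ : Fin (n + 1) → S) : 0 ≤ joint π T E x n σ :=
  mul_nonneg (mul_nonneg (hπ _) (prod_nonneg fun _ _ => hT _ _)) (prod_nonneg fun _ _ => hE _ _)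

section Gibbs

open Real

theorem mul_log_sub_mul_log_le {p q c : ℝ} (hp : 0 ≤ p) (hq : 0 ≤ q) (hpq : 0 < p → 0 < q)
    (hc : 0 < c) : p * log q - p * log p ≤ c * q - p - p * log c := by
  rcases hp.eq_or_lt with rfl | hp
  · simpa using mul_nonneg hc.le hq
  have hq := hpq hp
  have h := log_le_sub_one_of_pos (show 0 < c * q / p by positivity)
  rw [log_div (by positivity) hp.ne', log_mul hc.ne' hq.ne'] at h
  have h := mul_le_mul_of_nonneg_left h hp.le
  have hcancel : p * (c * q / p - 1) = c * q - p := by field_simp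
  linarith

theorem sum_pos_of_pos_imp_pos {ι : Type*} [Fintype ι] {p q : ι → ℝ} (hq : ∀ i, 0 ≤ q i)
    (hpq : ∀ i, 0 < p i → 0 < q i) (hZ : 0 < ∑ i, p i) :
    0 < ∑ i, q i := by
  obtain ⟨i, -, hi⟩ :=
    exists_lt_of_sum_lt (by simpa using hZ : ∑ _i : ι, (0 : ℝ) < ∑ i, p i)
  exact (hpq i hi).trans_le (single_le_sum (fun j _ => hq j) (mem_univ i))

/-- The EM auxiliary function `Q(η; θ)`, with `p = P_θ(·, x)` and `q = P_η(·, x)`. -/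
noncomputable def expectedLog {ι : Type*} [Fintype ι] (p q : ι → ℝ) : ℝ :=
  ∑ i, (p i / ∑ j, p j) * log (q i)

theorem expectedLog_sub_expectedLog_le {ι : Type*} [Fintype ι] {p q : ι → ℝ}
    (hp : ∀ i, 0 ≤ p i) (hq : ∀ i, 0 ≤ q i) (hpq : ∀ i, 0 < p i → 0 < q i)
    (hZ : 0 < ∑ i, p i) :
    expectedLog p q - expectedLog p p ≤ log (∑ i, q i) - log (∑ i, p i) := by
  set Z := ∑ i, p i
  set Z' := ∑ i, q i
  have hZ' : 0 < Z' := sum_pos_of_pos_imp_pos hq hpq hZ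
  have hsum : ∑ i, (p i * log (q i) - p i * log (p i)) ≤ Z * (log Z' - log Z) := calc
    _ ≤ ∑ i, (Z / Z' * q i - p i - p i * log (Z / Z')) :=
      sum_le_sum fun i _ => mul_log_sub_mul_log_le (hp i) (hq i) (hpq i) (div_pos hZ hZ')
    _ = Z * (log Z' - log Z) := by
      rw [sum_sub_distrib, sum_sub_distrib, ← mul_sum, ← sum_mul, log_div hZ.ne' hZ'.ne',
        div_mul_cancel₀ _ hZ'.ne']
      ring
  have hdiff : expectedLog p q - expectedLog p p =
      (∑ i, (p i * log (q i) - p i * log (p i))) / Z := by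
    rw [expectedLog, expectedLog, ← sum_sub_distrib, sum_div]
    exact sum_congr rfl fun i _ => by ring
  rw [hdiff, div_le_iff₀' hZ]
  exact hsum

end Gibbs

theorem hmm_EM_monotone_general {S X : Type*} [Fintype S]
    (π : S → ℝ) (T : S → S → ℝ) (E : X → S → ℝ)
    (hπ0 : ∀ s, 0 ≤ π s) (hT0 : ∀ s t, 0 ≤ T s t) (hE0 : ∀ x s, 0 ≤ E x s)
    (π' : S → ℝ) (T' : S → S → ℝ) (E' : X → S → ℝ)
    (hπ'0 : ∀ s, 0 ≤ π' s) (hT'0 : ∀ s t, 0 ≤ T' s t) (hE'0 : ∀ x s, 0 ≤ E' x s)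
    (n : ℕ) (x : ℕ → X)
    (hZ : 0 < ∑ σ : Fin (n + 1) → S, joint π T E x n σ)
    (habs : ∀ σ : Fin (n + 1) → S, 0 < joint π T E x n σ → 0 < joint π' T' E' x n σ) :
    (Real.log (∑ σ : Fin (n + 1) → S, joint π' T' E' x n σ) -
        Real.log (∑ σ : Fin (n + 1) → S, joint π T E x n σ) ≥
      (∑ σ : Fin (n + 1) → S,
          (joint π T E x n σ / ∑ τ : Fin (n + 1) → S, joint π T E x n τ) *
            Real.log (joint π' T' E' x n σ)) -
        ∑ σ : Fin (n + 1) → S,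
          (joint π T E x n σ / ∑ τ : Fin (n + 1) → S, joint π T E x n τ) *
            Real.log (joint π T E x n σ)) ∧
    ((∑ σ : Fin (n + 1) → S,
          (joint π T E x n σ / ∑ τ : Fin (n + 1) → S, joint π T E x n τ) *
            Real.log (joint π' T' E' x n σ)) ≥
        (∑ σ : Fin (n + 1) → S,
          (joint π T E x n σ / ∑ τ : Fin (n + 1) → S, joint π T E x n τ) *
            Real.log (joint π T E x n σ)) →
      (∑ σ : Fin (n + 1) → S, joint π' T' E' x n σ) ≥
        ∑ σ : Fin (n + 1) → S, joint π T E x n σ) := by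
  have hP := joint_nonneg hπ0 hT0 hE0 x n
  have hP' := joint_nonneg hπ'0 hT'0 hE'0 x n
  have hZ' := sum_pos_of_pos_imp_pos hP' habs hZ
  have hgibbs := expectedLog_sub_expectedLog_le hP hP' habs hZ
  refine ⟨hgibbs, fun hQ => (Real.log_le_log_iff hZ hZ').1 ?_⟩
  unfold expectedLog at hgibbs
  linarith

/-- The EM (Baum-Welch) step does not decrease the log-likelihood: for
parameter sets `θ = (π,T,E)` and `θ' = (π',T',E')` and a fixed observation sequence,
if `Z_θ := Σ_σ P_θ(σ,x) > 0` and `P_{θ'}(σ,x) > 0` for every `σ` with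
`P_θ(σ,x) > 0`, then `log Z_{θ'} − log Z_θ ≥ Q(θ';θ) − Q(θ;θ)`, where
`Q(η;θ) := Σ_σ (P_θ(σ,x)/Z_θ) · log P_η(σ,x)`.  In particular, if
`Q(θ';θ) ≥ Q(θ;θ)` then `Z_{θ'} ≥ Z_θ`. -/
theorem hmm_EM_monotone {S X : Type*} [Fintype S] [Fintype X]
    (π : S → ℝ) (T : S → S → ℝ) (E : X → S → ℝ)
    (hπ0 : ∀ s, 0 ≤ π s) (hπ1 : ∑ s, π s = 1)
    (hT0 : ∀ s t, 0 ≤ T s t) (hT1 : ∀ s, ∑ t, T s t = 1)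
    (hE0 : ∀ x s, 0 ≤ E x s) (hE1 : ∀ s, ∑ x, E x s = 1)
    (π' : S → ℝ) (T' : S → S → ℝ) (E' : X → S → ℝ)
    (hπ'0 : ∀ s, 0 ≤ π' s) (hπ'1 : ∑ s, π' s = 1)
    (hT'0 : ∀ s t, 0 ≤ T' s t) (hT'1 : ∀ s, ∑ t, T' s t = 1)
    (hE'0 : ∀ x s, 0 ≤ E' x s) (hE'1 : ∀ s, ∑ x, E' x s = 1)
    (n : ℕ) (x : ℕ → X)
    (hZ : 0 < ∑ σ : Fin (n + 1) → S, joint π T E x n σ)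
    (habs : ∀ σ : Fin (n + 1) → S, 0 < joint π T E x n σ → 0 < joint π' T' E' x n σ) :
    (Real.log (∑ σ : Fin (n + 1) → S, joint π' T' E' x n σ) -
        Real.log (∑ σ : Fin (n + 1) → S, joint π T E x n σ) ≥
      (∑ σ : Fin (n + 1) → S,
          (joint π T E x n σ / ∑ τ : Fin (n + 1) → S, joint π T E x n τ) *
            Real.log (joint π' T' E' x n σ)) -
        ∑ σ : Fin (n + 1) → S,
          (joint π T E x n σ / ∑ τ : Fin (n + 1) → S, joint π T E x n τ) *
            Real.log (joint π T E x n σ)) ∧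
    ((∑ σ : Fin (n + 1) → S,
          (joint π T E x n σ / ∑ τ : Fin (n + 1) → S, joint π T E x n τ) *
            Real.log (joint π' T' E' x n σ)) ≥
        (∑ σ : Fin (n + 1) → S,
          (joint π T E x n σ / ∑ τ : Fin (n + 1) → S, joint π T E x n τ) *
            Real.log (joint π T E x n σ)) →
      (∑ σ : Fin (n + 1) → S, joint π' T' E' x n σ) ≥
        ∑ σ : Fin (n + 1) → S, joint π T E x n σ) :=
  hmm_EM_monotone_general π T E hπ0 hT0 hE0 π' T' E' hπ'0 hT'0 hE'0 n x hZ habs
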